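/- Let X ∈ ℂ^{n1×n2×n3}, let T ∈ ℂ^{N3×n3} have full column rank, let Ω ⊆ [n1]×[n2]×[n3], let p ∈ (0,1], and let T(X) = U ⋆ S ⋆ V^H be the skinny t-SVD. Suppose ‖P_S T R_Ω T† P_S − P_S T T† P_S‖ ≤ 1/2 (operator norm with respect to the Frobenius norm, R_Ω = p⁻¹ S_Ω), and suppose H ∈ ℂ^{n1×n2×n3} satisfies S_Ω(H) = 0 and ‖P_{S⊥}(T(H))‖_* ≤ (p/(4 κ(T))) · ‖P_S(T(H))‖_F. Then H = 0. -/

import Mathlib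

namespace TC

open scoped BigOperators ComplexConjugate
open Matrix

/-- A third-order complex tensor. -/
abbrev Tensor (n1 n2 n3 : ℕ) := Fin n1 → Fin n2 → Fin n3 → ℂ

/-- The `k`-th frontal slice of a tensor. -/
def slice {n1 n2 n3 : ℕ} (A : Tensor n1 n2 n3) (k : Fin n3) : Matrix (Fin n1) (Fin n2) ℂ :=
  Matrix.of fun i j => A i j k

/-- The natural tensor-tensor product: slice-wise matrix multiplication. -/
noncomputable def tprod {n1 n2 l n3 : ℕ} (A : Tensor n1 n2 n3) (B : Tensor n2 l n3) : Tensor n1 l n3 :=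
  fun i j k => ∑ s, A i s k * B s j k

/-- Slice-wise conjugate transpose. -/
noncomputable def hconj {n1 n2 n3 : ℕ} (A : Tensor n1 n2 n3) : Tensor n2 n1 n3 :=
  fun i j k => (starRingEnd ℂ) (A j i k)

/-- Mode-3 product: apply the matrix `T` to every mode-3 fiber. -/
noncomputable def mode3 {n1 n2 m n : ℕ} (T : Matrix (Fin m) (Fin n) ℂ) (A : Tensor n1 n2 n) :
    Tensor n1 n2 m :=
  fun i j k => ∑ s, T k s * A i j s

/-- Frobenius norm of a tensor. -/
noncomputable def frobNorm {n1 n2 n3 : ℕ} (A : Tensor n1 n2 n3) : ℝ :=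
  Real.sqrt (∑ i, ∑ j, ∑ k, ‖A i j k‖ ^ 2)

/-- Entrywise maximum modulus of a tensor. -/
noncomputable def infNorm {n1 n2 n3 : ℕ} (A : Tensor n1 n2 n3) : ℝ :=
  ⨆ i, ⨆ j, ⨆ k, ‖A i j k‖

/-- `‖A‖_{1↦2}`: largest Frobenius norm of a lateral slice (column). -/
noncomputable def norm1to2 {n1 n2 n3 : ℕ} (A : Tensor n1 n2 n3) : ℝ :=
  ⨆ j, Real.sqrt (∑ i, ∑ k, ‖A i j k‖ ^ 2)

/-- `‖A‖_{2↦∞}`: largest Frobenius norm of a horizontal slice (row). -/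
noncomputable def norm2toInf {n1 n2 n3 : ℕ} (A : Tensor n1 n2 n3) : ℝ :=
  ⨆ i, Real.sqrt (∑ j, ∑ k, ‖A i j k‖ ^ 2)

/-- `‖A‖_{∞,2}`. -/
noncomputable def normInf2 {n1 n2 n3 : ℕ} (A : Tensor n1 n2 n3) : ℝ :=
  max (norm1to2 A) (norm2toInf A)

/-- Singular values of a complex matrix: square roots of the eigenvalues of `Mᴴ * M`. -/
noncomputable def singVals {m n : ℕ} (M : Matrix (Fin m) (Fin n) ℂ) : Fin n → ℝ :=
  fun i => Real.sqrt ((Matrix.isHermitian_conjTranspose_mul_self M).eigenvalues i)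

/-- Matrix spectral norm: the largest singular value. -/
noncomputable def specNormMat {m n : ℕ} (M : Matrix (Fin m) (Fin n) ℂ) : ℝ :=
  ⨆ i, singVals M i

/-- Matrix nuclear norm: sum of the singular values. -/
noncomputable def nucNormMat {m n : ℕ} (M : Matrix (Fin m) (Fin n) ℂ) : ℝ :=
  ∑ i, singVals M i

/-- Tensor spectral norm: the maximum singular value over all frontal slices. -/
noncomputable def tSpecNorm {n1 n2 n3 : ℕ} (A : Tensor n1 n2 n3) : ℝ :=
  ⨆ k, specNormMat (slice A k)

/-- Tensor nuclear norm: the sum of all singular values of all frontal slices. -/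
noncomputable def tNucNorm {n1 n2 n3 : ℕ} (A : Tensor n1 n2 n3) : ℝ :=
  ∑ k, nucNormMat (slice A k)

/-- Smallest singular value. -/
noncomputable def sigmaMin {m n : ℕ} (M : Matrix (Fin m) (Fin n) ℂ) : ℝ :=
  ⨅ i, singVals M i

/-- Condition number `κ(T) = σ_max(T) / σ_min(T)`. -/
noncomputable def kappa {m n : ℕ} (M : Matrix (Fin m) (Fin n) ℂ) : ℝ :=
  specNormMat M / sigmaMin M

/-- Entrywise maximum modulus of a matrix. -/
noncomputable def matInfNorm {m n : ℕ} (M : Matrix (Fin m) (Fin n) ℂ) : ℝ :=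
  ⨆ i, ⨆ j, ‖M i j‖

/-- `‖M‖_{1↦2}`: largest `ℓ2` norm of the columns of `M`. -/
noncomputable def col2Norm {m n : ℕ} (M : Matrix (Fin m) (Fin n) ℂ) : ℝ :=
  ⨆ j, Real.sqrt (∑ i, ‖M i j‖ ^ 2)

/-- Moore–Penrose pseudo-inverse of a matrix of full column rank. -/
noncomputable def pinv {N3 n3 : ℕ} (T : Matrix (Fin N3) (Fin n3) ℂ) :
    Matrix (Fin n3) (Fin N3) ℂ :=
  (Tᴴ * T)⁻¹ * Tᴴ

/-- `ρ(T) = N3 · max(‖T‖_∞², ‖T†‖_∞²)`. -/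
noncomputable def rho {N3 n3 : ℕ} (T : Matrix (Fin N3) (Fin n3) ℂ) : ℝ :=
  (N3 : ℝ) * max (matInfNorm T ^ 2) (matInfNorm (pinv T) ^ 2)

/-- `T` has full column rank. -/
def FullColRank {N3 n3 : ℕ} (T : Matrix (Fin N3) (Fin n3) ℂ) : Prop := T.rank = n3

/-- The sampling operator `S_Ω`. -/
noncomputable def sampleOp {n1 n2 n3 : ℕ} (Ω : Finset (Fin n1 × Fin n2 × Fin n3)) (A : Tensor n1 n2 n3) :
    Tensor n1 n2 n3 :=
  fun i j k => if (i, j, k) ∈ Ω then A i j k else 0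

open Classical in
/-- The probability, under Bernoulli(p) sampling of each index independently, that the
random sampled index set satisfies the event `E`. -/
noncomputable def berProb {ι : Type*} [Fintype ι] (p : ℝ) (E : Finset ι → Prop) : ℝ :=
  ∑ Ω ∈ (Finset.univ : Finset ι).powerset,
    if E Ω then p ^ Ω.card * (1 - p) ^ (Fintype.card ι - Ω.card) else 0

/-- Skinny natural t-SVD of tubal rank `r`: `A = U ⋆ S ⋆ Vᴴ` with slice-wise orthonormal
columns for `U`, `V`, slice-wise diagonal `S` with nonnegative (real) diagonal entries,
and no zero tube on the diagonal of `S` (so `r` is exactly the tubal rank of `A`). -/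
structure IsSkinnyTSVD {n1 n2 n3 : ℕ} (A : Tensor n1 n2 n3) (r : ℕ)
    (U : Tensor n1 r n3) (S : Tensor r r n3) (V : Tensor n2 r n3) : Prop where
  factor : A = tprod U (tprod S (hconj V))
  U_orth : ∀ k : Fin n3, (slice U k)ᴴ * slice U k = 1
  V_orth : ∀ k : Fin n3, (slice V k)ᴴ * slice V k = 1
  S_diag : ∀ (k : Fin n3) (i j : Fin r), i ≠ j → S i j k = 0
  S_real_nonneg : ∀ (k : Fin n3) (i : Fin r), (S i i k).im = 0 ∧ 0 ≤ (S i i k).re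
  tubes_ne : ∀ i : Fin r, ∃ k : Fin n3, S i i k ≠ 0

/-- Full natural t-SVD: `A = U ⋆ S ⋆ Vᴴ` with slice-wise unitary `U`, `V` and slice-wise
diagonal `S` with nonnegative (real) diagonal entries. -/
structure IsFullTSVD {n1 n2 n3 : ℕ} (A : Tensor n1 n2 n3)
    (U : Tensor n1 n1 n3) (S : Tensor n1 n2 n3) (V : Tensor n2 n2 n3) : Prop where
  factor : A = tprod U (tprod S (hconj V))
  U_unitary : ∀ k : Fin n3, (slice U k)ᴴ * slice U k = 1
  V_unitary : ∀ k : Fin n3, (slice V k)ᴴ * slice V k = 1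
  S_diag : ∀ (k : Fin n3) (i : Fin n1) (j : Fin n2), (i : ℕ) ≠ (j : ℕ) → S i j k = 0
  S_real_nonneg : ∀ (k : Fin n3) (i : Fin n1) (j : Fin n2), (i : ℕ) = (j : ℕ) →
    (S i j k).im = 0 ∧ 0 ≤ (S i j k).re

/-- `(S - τ)₊`: replace every diagonal entry `s` of each frontal slice by `max (s - τ) 0`. -/
noncomputable def shrink {n1 n2 n3 : ℕ} (τ : ℝ) (S : Tensor n1 n2 n3) : Tensor n1 n2 n3 :=
  fun i j k => if (i : ℕ) = (j : ℕ) then ((max ((S i j k).re - τ) 0 : ℝ) : ℂ) else S i j k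

/-- The projection `P_S` onto the tangent subspace spanned by the singular tensors. -/
noncomputable def PS {n1 n2 n3 r : ℕ} (U : Tensor n1 r n3) (V : Tensor n2 r n3) (Z : Tensor n1 n2 n3) :
    Tensor n1 n2 n3 :=
  tprod U (tprod (hconj U) Z) + tprod Z (tprod V (hconj V))
    - tprod U (tprod (hconj U) (tprod Z (tprod V (hconj V))))

/-- The complementary projection `P_{S⊥}`. -/
noncomputable def PSperp {n1 n2 n3 r : ℕ} (U : Tensor n1 r n3) (V : Tensor n2 r n3) (Z : Tensor n1 n2 n3) :
    Tensor n1 n2 n3 :=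
  Z - PS U V Z

/-- Operator norm of a map between tensor spaces, with respect to Frobenius norms. -/
noncomputable def opNormT {a b c d e f : ℕ} (L : Tensor a b c → Tensor d e f) : ℝ :=
  sSup {x : ℝ | ∃ Z : Tensor a b c, frobNorm Z ≤ 1 ∧ x = frobNorm (L Z)}

/-- Tensor column basis `ξ_i ∈ ℂ^{n×1×m}`. -/
noncomputable def xiB (n m : ℕ) (i : Fin n) : Tensor n 1 m := fun a _ _ => if a = i then 1 else 0

/-- Tensor frontal-slice basis `ζ_k ∈ ℂ^{1×1×n}`. -/
noncomputable def zetaB (n : ℕ) (k : Fin n) : Tensor 1 1 n := fun _ _ c => if c = k then 1 else 0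

/-- Standard inner product of tensors. -/
noncomputable def tinner {n1 n2 n3 : ℕ} (A B : Tensor n1 n2 n3) : ℂ :=
  ∑ i, ∑ j, ∑ k, (starRingEnd ℂ) (A i j k) * B i j k

/-- Standard basis tensor `e_{ijk}`. -/
noncomputable def eBasis (n1 n2 n3 : ℕ) (i : Fin n1) (j : Fin n2) (k : Fin n3) : Tensor n1 n2 n3 :=
  fun a b c => if a = i ∧ b = j ∧ c = k then 1 else 0

/-- `X` is the unique optimal solution of:
minimize `‖T(X̂)‖_*` subject to `S_Ω(X̂) = S_Ω(X)`. -/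
def UniqueSolution {n1 n2 n3 N3 : ℕ} (T : Matrix (Fin N3) (Fin n3) ℂ) (X : Tensor n1 n2 n3)
    (Ω : Finset (Fin n1 × Fin n2 × Fin n3)) : Prop :=
  ∀ Y : Tensor n1 n2 n3, sampleOp Ω Y = sampleOp Ω X → Y ≠ X →
    tNucNorm (mode3 T X) < tNucNorm (mode3 T Y)

/-- The tensor incoherence conditions with parameters `μ, ν`. -/
structure Incoherent {n1 n2 n3 N3 r : ℕ} (T : Matrix (Fin N3) (Fin n3) ℂ)
    (U : Tensor n1 r N3) (V : Tensor n2 r N3) (μ ν : ℝ) : Prop where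
  hU : ∀ i : Fin n1,
    frobNorm (tprod (hconj U) (xiB n1 N3 i)) ≤ Real.sqrt (μ * r * N3 / n1)
  hV : ∀ j : Fin n2,
    frobNorm (tprod (hconj V) (xiB n2 N3 j)) ≤ Real.sqrt (μ * r * N3 / n2)
  hUT : ∀ (i : Fin n1) (k : Fin n3),
    frobNorm (tprod (tprod (hconj U) (xiB n1 N3 i)) (mode3 T (zetaB n3 k)))
      ≤ Real.sqrt (ν * r / n1) * col2Norm T
  hVT : ∀ (j : Fin n2) (k : Fin n3),
    frobNorm (tprod (tprod (hconj V) (xiB n2 N3 j)) (mode3 T (zetaB n3 k)))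
      ≤ Real.sqrt (ν * r / n2) * col2Norm T

/-- The operator `P_S T R_Ω T† P_S − P_S T T† P_S` on `ℂ^{n1×n2×N3}`, `R_Ω = p⁻¹ S_Ω`. -/
noncomputable def isoOp {n1 n2 n3 N3 r : ℕ} (T : Matrix (Fin N3) (Fin n3) ℂ)
    (U : Tensor n1 r N3) (V : Tensor n2 r N3)
    (Ω : Finset (Fin n1 × Fin n2 × Fin n3)) (p : ℝ) :
    Tensor n1 n2 N3 → Tensor n1 n2 N3 :=
  fun Z =>
    PS U V (mode3 T ((p⁻¹ : ℝ) • sampleOp Ω (mode3 (pinv T) (PS U V Z))))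
      - PS U V (mode3 T (mode3 (pinv T) (PS U V Z)))

/-- The dual-certificate conditions (a) `(T T† − T S_Ω T†)ᴴ Y = 0` (the adjoint being
`T̃ Tᴴ − T̃ S_Ω Tᴴ` with `T̃ = (T†)ᴴ`), (b) `‖P_S(Y) − U ⋆ Vᴴ‖_F ≤ p/(8 κ(T))`, and
(c) `‖P_{S⊥}(Y)‖ ≤ 1/2` in tensor spectral norm. -/
def DualCert {n1 n2 n3 N3 r : ℕ} (T : Matrix (Fin N3) (Fin n3) ℂ)
    (U : Tensor n1 r N3) (V : Tensor n2 r N3)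
    (Ω : Finset (Fin n1 × Fin n2 × Fin n3)) (p : ℝ) (Y : Tensor n1 n2 N3) : Prop :=
  (mode3 (pinv T)ᴴ (mode3 Tᴴ Y) - mode3 (pinv T)ᴴ (sampleOp Ω (mode3 Tᴴ Y)) = 0) ∧
  frobNorm (PS U V Y - tprod U (hconj V)) ≤ p / (8 * kappa T) ∧
  tSpecNorm (PSperp U V Y) ≤ 1 / 2

/-! Write `Z = T(H)`, `A = P_S Z`, `B = P_{S⊥} Z` and `W = T† B`. Because `T† T = 1` and
`S_Ω H = 0`, the operator `P_S T R_Ω T† P_S − P_S T T† P_S` sends `Z` to `P_S T (W − R_Ω W) − A`;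
it only sees `A = P_S Z` since `P_S` is an orthogonal projection, so the hypothesis on its norm
gives `‖A‖_F ≤ (κ/p) ‖B‖_F + ‖A‖_F / 2`. Together with `‖B‖_F ≤ ‖B‖_* ≤ p/(4κ) ‖A‖_F` this
forces `B = 0`, then `A = 0`, so `T(H) = 0` and `H = T† T(H) = 0`. -/

section

open WithLp

lemma norm_le_of_inner_sub_eq_zero {𝕜 E : Type*} [RCLike 𝕜] [NormedAddCommGroup E]
    [InnerProductSpace 𝕜 E] {x y : E} (h : inner 𝕜 y (x - y) = 0) : ‖y‖ ≤ ‖x‖ := by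
  have hx := norm_add_sq_eq_norm_sq_add_norm_sq_of_inner_eq_zero (𝕜 := 𝕜) y (x - y) h
  rw [add_sub_cancel] at hx
  nlinarith [norm_nonneg y, norm_nonneg x, mul_self_nonneg ‖x - y‖]

section Frobenius

variable {n1 n2 n3 : ℕ}

noncomputable def toEuclidean (A : Tensor n1 n2 n3) : EuclideanSpace ℂ (Fin n1 × Fin n2 × Fin n3) :=
  toLp 2 fun x => A x.1 x.2.1 x.2.2

@[simp] lemma toEuclidean_apply (A : Tensor n1 n2 n3) (x : Fin n1 × Fin n2 × Fin n3) :
    toEuclidean A x = A x.1 x.2.1 x.2.2 := rfl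

lemma toEuclidean_sub (A B : Tensor n1 n2 n3) :
    toEuclidean (A - B) = toEuclidean A - toEuclidean B := rfl

lemma toEuclidean_smul (t : ℝ) (A : Tensor n1 n2 n3) :
    toEuclidean (t • A) = t • toEuclidean A := rfl

lemma toEuclidean_eq_zero {A : Tensor n1 n2 n3} : toEuclidean A = 0 ↔ A = 0 := by
  refine ⟨fun h => ?_, fun h => h ▸ rfl⟩
  funext i j k
  simpa using congrArg (· (i, j, k)) h

lemma norm_toEuclidean (A : Tensor n1 n2 n3) : ‖toEuclidean A‖ = frobNorm A := by
  simp [EuclideanSpace.norm_eq, frobNorm, Fintype.sum_prod_type]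

lemma tinner_eq_inner (A B : Tensor n1 n2 n3) :
    tinner A B = inner ℂ (toEuclidean A) (toEuclidean B) := by
  simp [tinner, EuclideanSpace.inner_toLp_toLp, toEuclidean, dotProduct, Fintype.sum_prod_type,
    mul_comm]

lemma frobNorm_nonneg (A : Tensor n1 n2 n3) : 0 ≤ frobNorm A := Real.sqrt_nonneg _

lemma frobNorm_sub_le (A B : Tensor n1 n2 n3) : frobNorm (A - B) ≤ frobNorm A + frobNorm B := by
  simpa only [← norm_toEuclidean, toEuclidean_sub] using norm_sub_le _ _

lemma frobNorm_smul (t : ℝ) (A : Tensor n1 n2 n3) : frobNorm (t • A) = |t| * frobNorm A := by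
  simp only [← norm_toEuclidean, toEuclidean_smul, norm_smul, Real.norm_eq_abs]

lemma frobNorm_eq_zero {A : Tensor n1 n2 n3} : frobNorm A = 0 ↔ A = 0 := by
  rw [← norm_toEuclidean, norm_eq_zero, toEuclidean_eq_zero]

lemma frobNorm_eq_sqrt_sum_fibers (A : Tensor n1 n2 n3) :
    frobNorm A = √(∑ i, ∑ j, ‖toLp 2 (A i j)‖ ^ 2) := by
  simp [frobNorm, EuclideanSpace.norm_sq_eq]

lemma frobNorm_le_of_fibers_le {m : ℕ} {A : Tensor n1 n2 m} {B : Tensor n1 n2 n3} {c : ℝ}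
    (hc : 0 ≤ c)
    (h : ∀ i j, ‖toLp 2 (A i j)‖ ≤ c * ‖toLp 2 (B i j)‖) : frobNorm A ≤ c * frobNorm B := by
  rw [frobNorm_eq_sqrt_sum_fibers, frobNorm_eq_sqrt_sum_fibers, ← Real.sqrt_sq hc,
    ← Real.sqrt_mul (sq_nonneg c), Finset.mul_sum]
  refine Real.sqrt_le_sqrt (Finset.sum_le_sum fun i _ => ?_)
  rw [Finset.mul_sum]
  exact Finset.sum_le_sum fun j _ => by
    rw [← mul_pow]; exact pow_le_pow_left₀ (norm_nonneg _) (h i j) 2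

lemma frobNorm_le_of_norm_le {A : Tensor n1 n2 n3} {B : Tensor n1 n2 n3} {c : ℝ} (hc : 0 ≤ c)
    (h : ∀ i j k, ‖A i j k‖ ≤ c * ‖B i j k‖) : frobNorm A ≤ c * frobNorm B := by
  refine frobNorm_le_of_fibers_le hc fun i j => ?_
  rw [EuclideanSpace.norm_eq, EuclideanSpace.norm_eq, ← Real.sqrt_sq hc,
    ← Real.sqrt_mul (sq_nonneg c), Finset.mul_sum]
  refine Real.sqrt_le_sqrt (Finset.sum_le_sum fun k _ => ?_)
  rw [← mul_pow]
  exact pow_le_pow_left₀ (norm_nonneg _) (h i j k) 2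

end Frobenius

section Slices

variable {a b c n3 : ℕ}

lemma slice_injective : Function.Injective (slice : Tensor a b n3 → Fin n3 → _) := by
  intro A B h
  funext i j k
  exact congrFun₂ (congrFun h k) i j

@[simp] lemma slice_add (A B : Tensor a b n3) (k : Fin n3) :
    slice (A + B) k = slice A k + slice B k := rfl

@[simp] lemma slice_sub (A B : Tensor a b n3) (k : Fin n3) :
    slice (A - B) k = slice A k - slice B k := rfl

@[simp] lemma slice_smul (t : ℝ) (A : Tensor a b n3) (k : Fin n3) :
    slice (t • A) k = t • slice A k := rfl

@[simp] lemma slice_zero (k : Fin n3) : slice (0 : Tensor a b n3) k = 0 := rfl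

@[simp] lemma slice_tprod (A : Tensor a b n3) (B : Tensor b c n3) (k : Fin n3) :
    slice (tprod A B) k = slice A k * slice B k := rfl

@[simp] lemma slice_hconj (A : Tensor a b n3) (k : Fin n3) :
    slice (hconj A) k = (slice A k)ᴴ := rfl

lemma tprod_assoc {d : ℕ} (A : Tensor a b n3) (B : Tensor b c n3) (C : Tensor c d n3) :
    tprod (tprod A B) C = tprod A (tprod B C) :=
  slice_injective (funext fun k => by simp [Matrix.mul_assoc])

@[simp] lemma tprod_zero_left (A : Tensor b c n3) : tprod (0 : Tensor a b n3) A = 0 :=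
  slice_injective (funext fun k => by simp)

@[simp] lemma tprod_zero_right (A : Tensor a b n3) : tprod A (0 : Tensor b c n3) = 0 :=
  slice_injective (funext fun k => by simp)

lemma tinner_eq_sum_trace (A B : Tensor a b n3) :
    tinner A B = ∑ k, ((slice A k)ᴴ * slice B k).trace := by
  simp only [tinner, Matrix.trace, Matrix.diag, Matrix.mul_apply, Matrix.conjTranspose_apply,
    slice, Matrix.of_apply, Complex.star_def]
  rw [Finset.sum_comm_cycle]
  exact Finset.sum_congr rfl fun _ _ => Finset.sum_comm

lemma tinner_tprod_left (P : Tensor a b n3) (X : Tensor b c n3) (Y : Tensor a c n3) :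
    tinner (tprod P X) Y = tinner X (tprod (hconj P) Y) := by
  simp [tinner_eq_sum_trace, Matrix.conjTranspose_mul, Matrix.mul_assoc]

lemma tinner_tprod_hconj_right (X : Tensor a b n3) (Q : Tensor c b n3) (Y : Tensor a c n3) :
    tinner (tprod X (hconj Q)) Y = tinner X (tprod Y Q) := by
  simp [tinner_eq_sum_trace, Matrix.conjTranspose_mul, Matrix.mul_assoc,
    Matrix.trace_mul_comm (slice Q _)]

lemma tinner_add_left (X Y Z : Tensor a b n3) : tinner (X + Y) Z = tinner X Z + tinner Y Z := by
  simp [tinner_eq_sum_trace, Matrix.add_mul, Finset.sum_add_distrib]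

lemma tinner_sub_left (X Y Z : Tensor a b n3) : tinner (X - Y) Z = tinner X Z - tinner Y Z := by
  simp [tinner_eq_sum_trace, Matrix.sub_mul, Finset.sum_sub_distrib]

@[simp] lemma tinner_zero_right (X : Tensor a b n3) : tinner X 0 = 0 := by
  simp [tinner_eq_sum_trace]

end Slices

section TangentProjection

variable {n1 n2 n3 r : ℕ}

lemma PS_sub (U : Tensor n1 r n3) (V : Tensor n2 r n3) (X Y : Tensor n1 n2 n3) :
    PS U V (X - Y) = PS U V X - PS U V Y := by
  refine slice_injective (funext fun k => ?_)
  simp only [PS, slice_add, slice_sub, slice_tprod, slice_hconj, Matrix.mul_sub, Matrix.sub_mul]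
  abel

lemma PS_smul (U : Tensor n1 r n3) (V : Tensor n2 r n3) (t : ℝ) (X : Tensor n1 n2 n3) :
    PS U V (t • X) = t • PS U V X := by
  refine slice_injective (funext fun k => ?_)
  simp [PS, smul_sub, smul_add, Matrix.mul_smul, Matrix.smul_mul]

variable {U : Tensor n1 r n3} {V : Tensor n2 r n3}

lemma tprod_hconj_PSperp (hU : ∀ k, (slice U k)ᴴ * slice U k = 1) (Z : Tensor n1 n2 n3) :
    tprod (hconj U) (PSperp U V Z) = 0 := by
  refine slice_injective (funext fun k => ?_)
  simp [PSperp, PS, Matrix.mul_sub, Matrix.mul_add, ← Matrix.mul_assoc, hU k]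

lemma tprod_PSperp (hV : ∀ k, (slice V k)ᴴ * slice V k = 1) (Z : Tensor n1 n2 n3) :
    tprod (PSperp U V Z) V = 0 := by
  refine slice_injective (funext fun k => ?_)
  simp [PSperp, PS, Matrix.sub_mul, Matrix.add_mul, Matrix.mul_assoc, hV k]

variable (hU : ∀ k, (slice U k)ᴴ * slice U k = 1) (hV : ∀ k, (slice V k)ᴴ * slice V k = 1)
include hU hV

lemma PS_PSperp (Z : Tensor n1 n2 n3) : PS U V (PSperp U V Z) = 0 := by
  rw [PS, tprod_hconj_PSperp hU, ← tprod_assoc (PSperp U V Z), tprod_PSperp hV]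
  simp

lemma PS_PS (Z : Tensor n1 n2 n3) : PS U V (PS U V Z) = PS U V Z := by
  have := PS_PSperp hU hV Z
  rwa [PSperp, PS_sub, sub_eq_zero, eq_comm] at this

lemma tinner_PS_PSperp (Z : Tensor n1 n2 n3) : tinner (PS U V Z) (PSperp U V Z) = 0 := by
  rw [PS, ← tprod_assoc Z, tinner_sub_left, tinner_add_left, tinner_tprod_hconj_right,
    tprod_PSperp hV]
  simp [tinner_tprod_left, tprod_hconj_PSperp hU]

lemma frobNorm_PS_le (Z : Tensor n1 n2 n3) : frobNorm (PS U V Z) ≤ frobNorm Z := by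
  rw [← norm_toEuclidean, ← norm_toEuclidean]
  refine norm_le_of_inner_sub_eq_zero (𝕜 := ℂ) ?_
  rw [← toEuclidean_sub, ← tinner_eq_inner]
  exact tinner_PS_PSperp hU hV Z

end TangentProjection

lemma _root_.Matrix.IsHermitian.inner_mulVec_eq_sum {𝕜 ι : Type*} [RCLike 𝕜] [Fintype ι]
    [DecidableEq ι] {A : Matrix ι ι 𝕜} (hA : A.IsHermitian) (v : ι → 𝕜) :
    inner 𝕜 (toLp 2 v) (toLp 2 (A *ᵥ v))
      = ∑ i, (hA.eigenvalues i : 𝕜) *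
          ((‖inner 𝕜 (hA.eigenvectorBasis i) (toLp 2 v)‖ ^ 2 : ℝ) : 𝕜) := by
  rw [← hA.eigenvectorBasis.sum_inner_mul_inner]
  refine Finset.sum_congr rfl fun i _ => ?_
  have hAb : Matrix.toEuclideanLin A (hA.eigenvectorBasis i)
      = (hA.eigenvalues i : 𝕜) • hA.eigenvectorBasis i := by
    rw [Matrix.toLpLin_apply, hA.mulVec_eigenvectorBasis, RCLike.real_smul_eq_coe_smul (K := 𝕜),
      WithLp.toLp_smul, WithLp.toLp_ofLp]
  have hsymm := (Matrix.isSymmetric_toEuclideanLin_iff.mpr hA) (hA.eigenvectorBasis i) (toLp 2 v)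
  change _ * inner 𝕜 _ (Matrix.toEuclideanLin A (toLp 2 v)) = _
  rw [← hsymm, hAb, inner_smul_left, RCLike.conj_ofReal, ← inner_conj_symm, RCLike.ofReal_pow,
    mul_left_comm, RCLike.conj_mul]

section SingularValues

variable {m n : ℕ}

lemma singVals_nonneg (M : Matrix (Fin m) (Fin n) ℂ) (i : Fin n) : 0 ≤ singVals M i :=
  Real.sqrt_nonneg _

lemma singVals_sq (M : Matrix (Fin m) (Fin n) ℂ) (i : Fin n) :
    singVals M i ^ 2 = (Matrix.isHermitian_conjTranspose_mul_self M).eigenvalues i :=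
  Real.sq_sqrt (Matrix.eigenvalues_conjTranspose_mul_self_nonneg M i)

lemma singVals_le_specNormMat (M : Matrix (Fin m) (Fin n) ℂ) (i : Fin n) :
    singVals M i ≤ specNormMat M :=
  le_ciSup (Set.finite_range _).bddAbove i

lemma sigmaMin_le_singVals (M : Matrix (Fin m) (Fin n) ℂ) (i : Fin n) :
    sigmaMin M ≤ singVals M i :=
  ciInf_le (Set.finite_range _).bddBelow i

lemma specNormMat_nonneg (M : Matrix (Fin m) (Fin n) ℂ) : 0 ≤ specNormMat M :=
  Real.iSup_nonneg (singVals_nonneg M)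

lemma sigmaMin_nonneg (M : Matrix (Fin m) (Fin n) ℂ) : 0 ≤ sigmaMin M :=
  Real.iInf_nonneg (singVals_nonneg M)

lemma kappa_nonneg (M : Matrix (Fin m) (Fin n) ℂ) : 0 ≤ kappa M :=
  div_nonneg (specNormMat_nonneg M) (sigmaMin_nonneg M)

lemma inner_conjTranspose_mul_self_mulVec (M : Matrix (Fin m) (Fin n) ℂ) (v : Fin n → ℂ) :
    inner ℂ (toLp 2 v) (toLp 2 ((Mᴴ * M) *ᵥ v)) = (‖toLp 2 (M *ᵥ v)‖ ^ 2 : ℝ) := by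
  rw [← Matrix.mulVec_mulVec]
  change inner ℂ _ (Matrix.toEuclideanLin Mᴴ (Matrix.toEuclideanLin M (toLp 2 v))) = _
  rw [Matrix.toEuclideanLin_conjTranspose_eq_adjoint, LinearMap.adjoint_inner_right,
    inner_self_eq_norm_sq_to_K]
  push_cast
  rfl

lemma sq_norm_mulVec_eq_sum (M : Matrix (Fin m) (Fin n) ℂ) (v : Fin n → ℂ) :
    ‖toLp 2 (M *ᵥ v)‖ ^ 2 = ∑ i, singVals M i ^ 2 *
      ‖inner ℂ ((Matrix.isHermitian_conjTranspose_mul_self M).eigenvectorBasis i)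
        (toLp 2 v)‖ ^ 2 := by
  have h := (Matrix.isHermitian_conjTranspose_mul_self M).inner_mulVec_eq_sum v
  rw [inner_conjTranspose_mul_self_mulVec] at h
  simp only [singVals_sq]
  apply Complex.ofReal_injective
  rw [h]
  push_cast
  rfl

lemma norm_mulVec_le (M : Matrix (Fin m) (Fin n) ℂ) (v : Fin n → ℂ) :
    ‖toLp 2 (M *ᵥ v)‖ ≤ specNormMat M * ‖toLp 2 v‖ := by
  rw [← pow_le_pow_iff_left₀ (norm_nonneg _)
    (mul_nonneg (specNormMat_nonneg M) (norm_nonneg _)) two_ne_zero, mul_pow,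
    sq_norm_mulVec_eq_sum,
    ← (Matrix.isHermitian_conjTranspose_mul_self M).eigenvectorBasis.sum_sq_norm_inner_right,
    Finset.mul_sum]
  gcongr with i
  exacts [singVals_nonneg M i, singVals_le_specNormMat M i]

lemma sigmaMin_mul_norm_le (M : Matrix (Fin m) (Fin n) ℂ) (v : Fin n → ℂ) :
    sigmaMin M * ‖toLp 2 v‖ ≤ ‖toLp 2 (M *ᵥ v)‖ := by
  rw [← pow_le_pow_iff_left₀ (mul_nonneg (sigmaMin_nonneg M) (norm_nonneg _)) (norm_nonneg _)
    two_ne_zero, mul_pow, sq_norm_mulVec_eq_sum,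
    ← (Matrix.isHermitian_conjTranspose_mul_self M).eigenvectorBasis.sum_sq_norm_inner_right,
    Finset.mul_sum]
  gcongr with i
  exacts [sigmaMin_nonneg M, sigmaMin_le_singVals M i]

end SingularValues

section PseudoInverse

open scoped ComplexOrder

variable {N3 n3 : ℕ} {T : Matrix (Fin N3) (Fin n3) ℂ}

lemma eigenvalues_conjTranspose_mul_self_ne_zero (hT : FullColRank T) (i : Fin n3) :
    (Matrix.isHermitian_conjTranspose_mul_self T).eigenvalues i ≠ 0 := by
  intro h0
  have hrank := (Matrix.isHermitian_conjTranspose_mul_self T).rank_eq_card_non_zero_eigs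
  rw [Matrix.rank_conjTranspose_mul_self, hT] at hrank
  have hlt := Fintype.card_subtype_lt
    (p := fun j => (Matrix.isHermitian_conjTranspose_mul_self T).eigenvalues j ≠ 0) (x := i)
    (by simp [h0])
  rw [Fintype.card_fin, ← hrank] at hlt
  exact lt_irrefl _ hlt

lemma sigmaMin_pos (hT : FullColRank T) (hn : n3 ≠ 0) : 0 < sigmaMin T := by
  have : Nonempty (Fin n3) := ⟨⟨0, Nat.pos_of_ne_zero hn⟩⟩
  obtain ⟨i, hi⟩ := exists_eq_ciInf_of_finite (f := singVals T)
  rw [sigmaMin, ← hi, singVals]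
  exact Real.sqrt_pos.mpr ((Matrix.eigenvalues_conjTranspose_mul_self_nonneg T i).lt_of_ne
    (eigenvalues_conjTranspose_mul_self_ne_zero hT i).symm)

lemma isUnit_det_conjTranspose_mul_self (hT : FullColRank T) : IsUnit (Tᴴ * T).det := by
  rw [(Matrix.isHermitian_conjTranspose_mul_self T).det_eq_prod_eigenvalues, isUnit_iff_ne_zero,
    Finset.prod_ne_zero_iff]
  exact fun i _ => Complex.ofReal_ne_zero.mpr (eigenvalues_conjTranspose_mul_self_ne_zero hT i)

lemma pinv_mul (hT : FullColRank T) : pinv T * T = 1 := by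
  rw [pinv, Matrix.mul_assoc]
  exact Matrix.nonsing_inv_mul _ (isUnit_det_conjTranspose_mul_self hT)

lemma conjTranspose_mul_mul_pinv (hT : FullColRank T) : Tᴴ * T * pinv T = Tᴴ := by
  rw [pinv, ← Matrix.mul_assoc, Matrix.mul_nonsing_inv _ (isUnit_det_conjTranspose_mul_self hT),
    Matrix.one_mul]

lemma norm_mul_pinv_mulVec_le (hT : FullColRank T) (b : Fin N3 → ℂ) :
    ‖toLp 2 (T *ᵥ (pinv T *ᵥ b))‖ ≤ ‖toLp 2 b‖ := by
  have hnormal : Tᴴ *ᵥ (b - T *ᵥ (pinv T *ᵥ b)) = 0 := by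
    rw [Matrix.mulVec_sub, Matrix.mulVec_mulVec, Matrix.mulVec_mulVec,
      conjTranspose_mul_mul_pinv hT, sub_self]
  refine norm_le_of_inner_sub_eq_zero (𝕜 := ℂ) ?_
  rw [← WithLp.toLp_sub, EuclideanSpace.inner_toLp_toLp, Matrix.star_mulVec, dotProduct_comm,
    ← Matrix.dotProduct_mulVec, hnormal, dotProduct_zero]

lemma norm_pinv_mulVec_le (hT : FullColRank T) (b : Fin N3 → ℂ) :
    ‖toLp 2 (pinv T *ᵥ b)‖ ≤ (sigmaMin T)⁻¹ * ‖toLp 2 b‖ := by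
  rcases eq_or_ne n3 0 with rfl | hn
  -- for `n3 = 0`, `sigmaMin T` is the empty infimum `0` and both sides vanish
  · have : ‖toLp 2 (pinv T *ᵥ b)‖ = 0 := by simp [EuclideanSpace.norm_eq]
    rw [this]
    exact mul_nonneg (inv_nonneg.mpr (sigmaMin_nonneg T)) (norm_nonneg _)
  rw [le_inv_mul_iff₀ (sigmaMin_pos hT hn)]
  exact (sigmaMin_mul_norm_le T _).trans (norm_mul_pinv_mulVec_le hT b)

end PseudoInverse

section Mode3

variable {n1 n2 m n l : ℕ}

lemma mode3_fiber (M : Matrix (Fin m) (Fin n) ℂ) (A : Tensor n1 n2 n) (i : Fin n1) (j : Fin n2) :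
    mode3 M A i j = M *ᵥ A i j := rfl

lemma mode3_mode3 (A : Matrix (Fin m) (Fin n) ℂ) (B : Matrix (Fin n) (Fin l) ℂ)
    (X : Tensor n1 n2 l) : mode3 A (mode3 B X) = mode3 (A * B) X := by
  funext i j k
  exact congrFun (Matrix.mulVec_mulVec (X i j) A B) k

lemma mode3_one (X : Tensor n1 n2 n) : mode3 (1 : Matrix (Fin n) (Fin n) ℂ) X = X := by
  funext i j k
  exact congrFun (Matrix.one_mulVec (X i j)) k

lemma mode3_zero (M : Matrix (Fin m) (Fin n) ℂ) : mode3 M (0 : Tensor n1 n2 n) = 0 := by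
  funext i j k
  simp [mode3]

lemma mode3_sub (M : Matrix (Fin m) (Fin n) ℂ) (X Y : Tensor n1 n2 n) :
    mode3 M (X - Y) = mode3 M X - mode3 M Y := by
  funext i j k
  simp [mode3, mul_sub, Finset.sum_sub_distrib]

lemma mode3_smul (M : Matrix (Fin m) (Fin n) ℂ) (t : ℝ) (X : Tensor n1 n2 n) :
    mode3 M (t • X) = t • mode3 M X := by
  funext i j k
  simp [mode3, Finset.smul_sum, mul_left_comm]

lemma frobNorm_mode3_le_of_mulVec_le {M : Matrix (Fin m) (Fin n) ℂ} {c : ℝ} (hc : 0 ≤ c)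
    (hM : ∀ v, ‖toLp 2 (M *ᵥ v)‖ ≤ c * ‖toLp 2 v‖) (A : Tensor n1 n2 n) :
    frobNorm (mode3 M A) ≤ c * frobNorm A := by
  refine frobNorm_le_of_fibers_le hc fun i j => ?_
  rw [mode3_fiber]
  exact hM (A i j)

lemma frobNorm_mode3_le (M : Matrix (Fin m) (Fin n) ℂ) (A : Tensor n1 n2 n) :
    frobNorm (mode3 M A) ≤ specNormMat M * frobNorm A :=
  frobNorm_mode3_le_of_mulVec_le (specNormMat_nonneg M) (norm_mulVec_le M) A

lemma frobNorm_mode3_pinv_le {T : Matrix (Fin m) (Fin n) ℂ} (hT : FullColRank T)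
    (A : Tensor n1 n2 m) : frobNorm (mode3 (pinv T) A) ≤ (sigmaMin T)⁻¹ * frobNorm A :=
  frobNorm_mode3_le_of_mulVec_le (inv_nonneg.mpr (sigmaMin_nonneg T)) (norm_pinv_mulVec_le hT) A

end Mode3

section Sampling

variable {n1 n2 n3 : ℕ} (Ω : Finset (Fin n1 × Fin n2 × Fin n3))

lemma sampleOp_sub (X Y : Tensor n1 n2 n3) : sampleOp Ω (X - Y) = sampleOp Ω X - sampleOp Ω Y := by
  funext i j k
  simp only [sampleOp, Pi.sub_apply]
  split_ifs <;> simp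

lemma sampleOp_smul (t : ℝ) (X : Tensor n1 n2 n3) : sampleOp Ω (t • X) = t • sampleOp Ω X := by
  funext i j k
  simp only [sampleOp, Pi.smul_apply]
  split_ifs <;> simp

lemma frobNorm_sampleOp_le (A : Tensor n1 n2 n3) : frobNorm (sampleOp Ω A) ≤ frobNorm A := by
  simpa using frobNorm_le_of_norm_le zero_le_one (A := sampleOp Ω A) (B := A) fun i j k => by
    simp only [sampleOp, one_mul]
    split_ifs <;> simp

lemma frobNorm_sub_inv_smul_sampleOp_le {p : ℝ} (hp0 : 0 < p) (hp1 : p ≤ 1) (W : Tensor n1 n2 n3) :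
    frobNorm (W - p⁻¹ • sampleOp Ω W) ≤ p⁻¹ * frobNorm W := by
  have hp : 1 ≤ p⁻¹ := one_le_inv_iff₀.mpr ⟨hp0, hp1⟩
  refine frobNorm_le_of_norm_le (by linarith) fun i j k => ?_
  simp only [sampleOp, Pi.sub_apply, Pi.smul_apply]
  split_ifs
  · rw [← one_smul ℝ (W i j k), smul_smul, ← sub_smul, one_smul, mul_one, norm_smul,
      Real.norm_of_nonpos (by linarith)]
    nlinarith [norm_nonneg (W i j k)]
  · simpa using le_mul_of_one_le_left (norm_nonneg _) hp

end Sampling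

section NuclearNorm

variable {m n : ℕ}

lemma sum_sq_norm_eq_sum_sq_singVals (M : Matrix (Fin m) (Fin n) ℂ) :
    ∑ i, ∑ j, ‖M i j‖ ^ 2 = ∑ i, singVals M i ^ 2 := by
  have htrace := (Matrix.isHermitian_conjTranspose_mul_self M).trace_eq_sum_eigenvalues
  simp only [Matrix.trace, Matrix.diag, Matrix.mul_apply, Matrix.conjTranspose_apply,
    RCLike.star_def, RCLike.conj_mul] at htrace
  simp only [singVals_sq]
  rw [Finset.sum_comm]
  exact_mod_cast htrace

lemma frobNorm_le_tNucNorm {n1 n2 n3 : ℕ} (A : Tensor n1 n2 n3) : frobNorm A ≤ tNucNorm A := by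
  have hσ : ∀ k i, 0 ≤ singVals (slice A k) i := fun k => singVals_nonneg _
  have hslices : ∑ i, ∑ j, ∑ k, ‖A i j k‖ ^ 2 = ∑ k, ∑ i, singVals (slice A k) i ^ 2 := by
    rw [Finset.sum_comm_cycle]
    exact Finset.sum_congr rfl fun k _ => sum_sq_norm_eq_sum_sq_singVals (slice A k)
  have hsq : ∑ k, ∑ i, singVals (slice A k) i ^ 2 ≤ tNucNorm A ^ 2 :=
    calc ∑ k, ∑ i, singVals (slice A k) i ^ 2
        ≤ ∑ k, (∑ i, singVals (slice A k) i) ^ 2 :=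
          Finset.sum_le_sum fun k _ => Finset.sum_sq_le_sq_sum_of_nonneg fun i _ => hσ k i
      _ ≤ tNucNorm A ^ 2 := Finset.sum_sq_le_sq_sum_of_nonneg fun k _ =>
          Finset.sum_nonneg fun i _ => hσ k i
  rw [frobNorm, hslices]
  exact (Real.sqrt_le_sqrt hsq).trans_eq (Real.sqrt_sq
    (Finset.sum_nonneg fun k _ => Finset.sum_nonneg fun i _ => hσ k i))

end NuclearNorm

-- `opNormT L` is an `sSup` in `ℝ`, which says nothing unless its set is bounded above.
lemma frobNorm_apply_le_of_opNormT_le {a b c d e f : ℕ} {L : Tensor a b c → Tensor d e f} {M : ℝ}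
    (hL : ∀ (t : ℝ) Z, L (t • Z) = t • L Z) (hbdd : ∃ C, ∀ Z, frobNorm (L Z) ≤ C * frobNorm Z)
    (hM : opNormT L ≤ M) (Z : Tensor a b c) : frobNorm (L Z) ≤ M * frobNorm Z := by
  obtain ⟨C, hC⟩ := hbdd
  rcases (frobNorm_nonneg Z).eq_or_lt with hZ | hZ
  · have hLZ : L Z = 0 := by
      rw [frobNorm_eq_zero.mp hZ.symm, ← zero_smul ℝ (0 : Tensor a b c), hL, zero_smul]
    rw [hLZ, ← hZ, mul_zero, frobNorm_eq_zero.mpr rfl]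
  have hunit : frobNorm ((frobNorm Z)⁻¹ • Z) ≤ 1 := by
    rw [frobNorm_smul, abs_of_pos (inv_pos.mpr hZ), inv_mul_cancel₀ hZ.ne']
  have hbdd : BddAbove {x : ℝ | ∃ W, frobNorm W ≤ 1 ∧ x = frobNorm (L W)} := by
    refine ⟨|C|, ?_⟩
    rintro x ⟨W, hW, rfl⟩
    calc frobNorm (L W) ≤ C * frobNorm W := hC W
      _ ≤ |C| * frobNorm W := mul_le_mul_of_nonneg_right (le_abs_self C) (frobNorm_nonneg W)
      _ ≤ |C| := mul_le_of_le_one_right (abs_nonneg C) hW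
  have := (le_csSup hbdd ⟨_, hunit, rfl⟩).trans hM
  rw [hL, frobNorm_smul, abs_of_pos (inv_pos.mpr hZ), inv_mul_le_iff₀ hZ] at this
  linarith

section IsometryOperator

variable {n1 n2 n3 N3 r : ℕ} {T : Matrix (Fin N3) (Fin n3) ℂ} {U : Tensor n1 r N3}
  {V : Tensor n2 r N3} {Ω : Finset (Fin n1 × Fin n2 × Fin n3)} {p : ℝ}

lemma isoOp_smul (t : ℝ) (Z : Tensor n1 n2 N3) :
    isoOp T U V Ω p (t • Z) = t • isoOp T U V Ω p Z := by
  simp only [isoOp, PS_smul, mode3_smul, sampleOp_smul, smul_comm p⁻¹ t, smul_sub]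

lemma isoOp_PS (hU : ∀ k, (slice U k)ᴴ * slice U k = 1) (hV : ∀ k, (slice V k)ᴴ * slice V k = 1)
    (Z : Tensor n1 n2 N3) : isoOp T U V Ω p (PS U V Z) = isoOp T U V Ω p Z := by
  simp only [isoOp, PS_PS hU hV]

lemma frobNorm_isoOp_le (hT : FullColRank T) (hU : ∀ k, (slice U k)ᴴ * slice U k = 1)
    (hV : ∀ k, (slice V k)ᴴ * slice V k = 1) (hp0 : 0 < p) (Z : Tensor n1 n2 N3) :
    frobNorm (isoOp T U V Ω p Z) ≤ specNormMat T * (p⁻¹ + 1) * (sigmaMin T)⁻¹ * frobNorm Z := by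
  set Y := mode3 (pinv T) (PS U V Z)
  have hY : frobNorm Y ≤ (sigmaMin T)⁻¹ * frobNorm Z :=
    (frobNorm_mode3_pinv_le hT _).trans
      (mul_le_mul_of_nonneg_left (frobNorm_PS_le hU hV Z) (inv_nonneg.mpr (sigmaMin_nonneg T)))
  have hPT : ∀ X, frobNorm (PS U V (mode3 T X)) ≤ specNormMat T * frobNorm X := fun X =>
    (frobNorm_PS_le hU hV _).trans (frobNorm_mode3_le T X)
  calc frobNorm (isoOp T U V Ω p Z)
      ≤ frobNorm (PS U V (mode3 T (p⁻¹ • sampleOp Ω Y))) + frobNorm (PS U V (mode3 T Y)) :=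
        frobNorm_sub_le _ _
    _ ≤ specNormMat T * (p⁻¹ * frobNorm Y) + specNormMat T * frobNorm Y := by
        gcongr
        · refine (hPT _).trans ?_
          rw [frobNorm_smul, abs_of_pos (inv_pos.mpr hp0)]
          gcongr
          · exact specNormMat_nonneg T
          · exact frobNorm_sampleOp_le Ω Y
        · exact hPT Y
    _ = specNormMat T * (p⁻¹ + 1) * frobNorm Y := by ring
    _ ≤ specNormMat T * (p⁻¹ + 1) * ((sigmaMin T)⁻¹ * frobNorm Z) := by
        gcongr
        exact mul_nonneg (specNormMat_nonneg T) (by positivity)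
    _ = _ := by ring

end IsometryOperator

section Perturbation

variable {n1 n2 n3 N3 r : ℕ} {T : Matrix (Fin N3) (Fin n3) ℂ} {U : Tensor n1 r N3}
  {V : Tensor n2 r N3} {Ω : Finset (Fin n1 × Fin n2 × Fin n3)} {p : ℝ} {H : Tensor n1 n2 n3}

lemma pinv_mode3_mode3 (hT : FullColRank T) (H : Tensor n1 n2 n3) :
    mode3 (pinv T) (mode3 T H) = H := by
  rw [mode3_mode3, pinv_mul hT, mode3_one]

lemma isoOp_mode3_eq (hT : FullColRank T) (hH : sampleOp Ω H = 0) :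
    let W := mode3 (pinv T) (PSperp U V (mode3 T H))
    isoOp T U V Ω p (mode3 T H)
      = PS U V (mode3 T (W - p⁻¹ • sampleOp Ω W)) - PS U V (mode3 T H) := by
  intro W
  have hPS : mode3 (pinv T) (PS U V (mode3 T H)) = H - W := by
    rw [← sub_sub_cancel (mode3 T H) (PS U V (mode3 T H)), mode3_sub, pinv_mode3_mode3 hT]
    rfl
  have hPS0 : PS U V 0 = 0 := by simpa using PS_sub U V 0 0
  simp only [isoOp, hPS, sampleOp_sub, hH, mode3_sub, PS_sub, smul_sub, smul_zero, mode3_zero,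
    hPS0]
  abel

lemma frobNorm_PS_le_of_sampleOp_eq_zero (hT : FullColRank T)
    (hU : ∀ k, (slice U k)ᴴ * slice U k = 1) (hV : ∀ k, (slice V k)ᴴ * slice V k = 1)
    (hp0 : 0 < p) (hp1 : p ≤ 1) (h1 : opNormT (isoOp T U V Ω p) ≤ 1 / 2)
    (hH : sampleOp Ω H = 0) :
    frobNorm (PS U V (mode3 T H)) ≤ 2 * kappa T / p * frobNorm (PSperp U V (mode3 T H)) := by
  set Z := mode3 T H
  set W := mode3 (pinv T) (PSperp U V Z)
  have hiso : frobNorm (isoOp T U V Ω p Z) ≤ 1 / 2 * frobNorm (PS U V Z) := by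
    rw [← isoOp_PS hU hV]
    exact frobNorm_apply_le_of_opNormT_le isoOp_smul ⟨_, frobNorm_isoOp_le hT hU hV hp0⟩ h1 _
  have hcorr : frobNorm (PS U V (mode3 T (W - p⁻¹ • sampleOp Ω W)))
      ≤ kappa T / p * frobNorm (PSperp U V Z) :=
    calc frobNorm (PS U V (mode3 T (W - p⁻¹ • sampleOp Ω W)))
        ≤ specNormMat T * frobNorm (W - p⁻¹ • sampleOp Ω W) :=
          (frobNorm_PS_le hU hV _).trans (frobNorm_mode3_le T _)
      _ ≤ specNormMat T * (p⁻¹ * ((sigmaMin T)⁻¹ * frobNorm (PSperp U V Z))) := by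
          gcongr
          · exact specNormMat_nonneg T
          refine (frobNorm_sub_inv_smul_sampleOp_le Ω hp0 hp1 W).trans ?_
          gcongr
          exact frobNorm_mode3_pinv_le hT _
      _ = kappa T / p * frobNorm (PSperp U V Z) := by rw [kappa]; ring
  have hsplit : frobNorm (PS U V Z)
      ≤ kappa T / p * frobNorm (PSperp U V Z) + 1 / 2 * frobNorm (PS U V Z) :=
    calc frobNorm (PS U V Z)
        = frobNorm (PS U V (mode3 T (W - p⁻¹ • sampleOp Ω W)) - isoOp T U V Ω p Z) := by
          rw [isoOp_mode3_eq hT hH, sub_sub_cancel]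
      _ ≤ _ := (frobNorm_sub_le _ _).trans (add_le_add hcorr hiso)
  linarith [show 2 * kappa T / p * frobNorm (PSperp U V Z)
    = 2 * (kappa T / p * frobNorm (PSperp U V Z)) by ring]

end Perturbation

end

/-- **Case 2 of the optimality proof: the perturbation vanishes.** -/
theorem perturbation_vanishes {n1 n2 n3 N3 r : ℕ}
    (X : Tensor n1 n2 n3) (T : Matrix (Fin N3) (Fin n3) ℂ)
    (U : Tensor n1 r N3) (S : Tensor r r N3) (V : Tensor n2 r N3)
    (Ω : Finset (Fin n1 × Fin n2 × Fin n3)) (p : ℝ)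
    (hT : FullColRank T) (hsvd : IsSkinnyTSVD (mode3 T X) r U S V)
    (hp0 : 0 < p) (hp1 : p ≤ 1)
    (h1 : opNormT (isoOp T U V Ω p) ≤ 1 / 2)
    (H : Tensor n1 n2 n3) (hH : sampleOp Ω H = 0)
    (hHn : tNucNorm (PSperp U V (mode3 T H)) ≤
      p / (4 * kappa T) * frobNorm (PS U V (mode3 T H))) :
    H = 0 := by
  set A := PS U V (mode3 T H)
  set B := PSperp U V (mode3 T H)
  have hA : frobNorm A ≤ 2 * kappa T / p * frobNorm B :=
    frobNorm_PS_le_of_sampleOp_eq_zero hT hsvd.U_orth hsvd.V_orth hp0 hp1 h1 hH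
  have hκ : p / (4 * kappa T) * (2 * kappa T / p) ≤ 1 / 2 := by
    -- `kappa T = 0` does occur, as the junk value `0 / 0` when `n3 = 0`
    rcases (kappa_nonneg T).eq_or_lt with hzero | hpos
    · simp [← hzero]
    · field_simp
      norm_num
  have hB : frobNorm B ≤ 1 / 2 * frobNorm B :=
    calc frobNorm B ≤ p / (4 * kappa T) * frobNorm A := (frobNorm_le_tNucNorm B).trans hHn
      _ ≤ p / (4 * kappa T) * (2 * kappa T / p * frobNorm B) :=
          mul_le_mul_of_nonneg_left hA (div_nonneg hp0.le (by linarith [kappa_nonneg T]))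
      _ ≤ 1 / 2 * frobNorm B := by
          rw [← mul_assoc]
          exact mul_le_mul_of_nonneg_right hκ (frobNorm_nonneg B)
  have hB0 : B = 0 := frobNorm_eq_zero.mp (by linarith [frobNorm_nonneg B])
  rw [frobNorm_eq_zero.mpr hB0, mul_zero] at hA
  have hA0 : A = 0 := frobNorm_eq_zero.mp (hA.antisymm (frobNorm_nonneg A))
  have hZ : mode3 T H = 0 := (sub_eq_zero.mp hB0).trans hA0
  rw [← pinv_mode3_mode3 hT H, hZ, mode3_zero]

end TC
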